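/- arXiv:2304.12967 — 8 statements merged into one kernel-verified Lean document; each statement's English description precedes it below -/
import Mathlib

section
/- (Monotonicity of independence) Let S' ⊆ S ⊆ [n]. If S is independent, then S' is independent. -/
/-! Adding an item raises `γ` by at most its profit, so `γ (A ∪ B) ≤ γ A + p(B)` and `γ T ≤ p(T)`.
For `S' ⊆ S` with `S` independent, `p(S) = γ S ≤ γ S' + p(S \ S') ≤ p(S') + p(S \ S') = p(S)`,
so every inequality is tight and `γ S' = p(S')`. -/

open Finset

/-- A set `S` is independent if `γ S = ∑ i ∈ S, p i`. -/
def AoNIndep {n : ℕ} (γ : Finset (Fin n) → ℕ) (p : Fin n → ℕ) (S : Finset (Fin n)) : Prop :=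
  γ S = ∑ i ∈ S, p i

section SubadditiveInsert

variable {α : Type*} [DecidableEq α] {γ : Finset α → ℕ} {p : α → ℕ}

lemma insert_le_add_of_allOrNothing
    (haon : ∀ i S, γ (insert i S) = γ S ∨ γ (insert i S) = γ S + p i) (i : α) (S : Finset α) :
    γ (insert i S) ≤ γ S + p i := by
  rcases haon i S with h | h <;> omega

lemma union_le_add_sum (hins : ∀ i S, γ (insert i S) ≤ γ S + p i) (A B : Finset α) :
    γ (A ∪ B) ≤ γ A + ∑ i ∈ B, p i := by
  induction B using Finset.induction_on with
  | empty => simp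
  | @insert i B hi ih =>
    rw [union_insert, sum_insert hi]
    have := hins i (A ∪ B)
    omega

lemma le_sum_of_insert_le (hγ0 : γ ∅ = 0) (hins : ∀ i S, γ (insert i S) ≤ γ S + p i)
    (T : Finset α) : γ T ≤ ∑ i ∈ T, p i := by
  simpa [hγ0] using union_le_add_sum hins ∅ T

end SubadditiveInsert

theorem indep_monotone_general {n : ℕ} (γ : Finset (Fin n) → ℕ) (p : Fin n → ℕ)
    (hγ0 : γ ∅ = 0)
    (haon : ∀ (i : Fin n) (S : Finset (Fin n)),
      γ (insert i S) = γ S ∨ γ (insert i S) = γ S + p i)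
    (S' S : Finset (Fin n)) (hSS : S' ⊆ S) (hS : AoNIndep γ p S) :
    AoNIndep γ p S' := by
  have hins := insert_le_add_of_allOrNothing haon
  have hupper : γ S' ≤ ∑ i ∈ S', p i := le_sum_of_insert_le hγ0 hins S'
  have hunion : γ S ≤ γ S' + ∑ i ∈ S \ S', p i := by
    simpa [union_sdiff_of_subset hSS] using union_le_add_sum hins S' (S \ S')
  have hsplit : ∑ i ∈ S \ S', p i + ∑ i ∈ S', p i = ∑ i ∈ S, p i := sum_sdiff hSS
  unfold AoNIndep at hS ⊢
  omega

theorem indep_monotone {n : ℕ} (γ : Finset (Fin n) → ℕ) (p : Fin n → ℕ)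
    (hp : ∀ i, 1 ≤ p i)
    (hγ0 : γ ∅ = 0)
    (hmono : ∀ S T : Finset (Fin n), S ⊆ T → γ S ≤ γ T)
    (hsub : ∀ S T : Finset (Fin n), S ⊆ T → ∀ i : Fin n,
      γ (insert i S) + γ T ≥ γ (insert i T) + γ S)
    (haon : ∀ (i : Fin n) (S : Finset (Fin n)),
      γ (insert i S) = γ S ∨ γ (insert i S) = γ S + p i)
    (S' S : Finset (Fin n)) (hSS : S' ⊆ S) (hS : AoNIndep γ p S) :
    AoNIndep γ p S' :=
  indep_monotone_general γ p hγ0 haon S' S hSS hS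
end

section
/- Let C be a cycle. Then all items of C have the same profit, i.e., p_i = p_j for all i, j ∈ C. -/
open Finset

/-- A cycle is a nonempty dependent set all of whose one-element deletions
are independent. -/
def AoNCycle {n : ℕ} (γ : Finset (Fin n) → ℕ) (p : Fin n → ℕ) (C : Finset (Fin n)) : Prop :=
  C.Nonempty ∧ ¬ AoNIndep γ p C ∧ ∀ i ∈ C, AoNIndep γ p (C.erase i)

-- Re-adding `i` to `C.erase i` gains `0` or `p i`, and a gain of `p i` would make `C` independent.
lemma AoNIndep.add_profit_eq_sum_of_erase {n : ℕ} {γ : Finset (Fin n) → ℕ} {p : Fin n → ℕ}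
    (haon : ∀ (i : Fin n) (S : Finset (Fin n)),
      γ (insert i S) = γ S ∨ γ (insert i S) = γ S + p i)
    {C : Finset (Fin n)} (hdep : ¬ AoNIndep γ p C) {i : Fin n} (hi : i ∈ C)
    (hind : AoNIndep γ p (C.erase i)) :
    γ C + p i = ∑ k ∈ C, p k := by
  have hsum : ∑ k ∈ C.erase i, p k + p i = ∑ k ∈ C, p k := sum_erase_add _ _ hi
  unfold AoNIndep at hdep hind
  rcases insert_erase hi ▸ haon i (C.erase i) with hzero | hfull
  · rw [hzero, hind, hsum]
  · exact absurd (by rw [hfull, hind, hsum]) hdep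

theorem cycle_equal_profits_general {n : ℕ} (γ : Finset (Fin n) → ℕ) (p : Fin n → ℕ)
    (haon : ∀ (i : Fin n) (S : Finset (Fin n)),
      γ (insert i S) = γ S ∨ γ (insert i S) = γ S + p i)
    (C : Finset (Fin n)) (hC : AoNCycle γ p C) :
    ∀ i ∈ C, ∀ j ∈ C, p i = p j := by
  obtain ⟨-, hdep, hind⟩ := hC
  intro i hi j hj
  have hi' := (hind i hi).add_profit_eq_sum_of_erase haon hdep hi
  have hj' := (hind j hj).add_profit_eq_sum_of_erase haon hdep hj
  omega

theorem cycle_equal_profits {n : ℕ} (γ : Finset (Fin n) → ℕ) (p : Fin n → ℕ)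
    (hp : ∀ i, 1 ≤ p i)
    (hγ0 : γ ∅ = 0)
    (hmono : ∀ S T : Finset (Fin n), S ⊆ T → γ S ≤ γ T)
    (hsub : ∀ S T : Finset (Fin n), S ⊆ T → ∀ i : Fin n,
      γ (insert i S) + γ T ≥ γ (insert i T) + γ S)
    (haon : ∀ (i : Fin n) (S : Finset (Fin n)),
      γ (insert i S) = γ S ∨ γ (insert i S) = γ S + p i)
    (C : Finset (Fin n)) (hC : AoNCycle γ p C) :
    ∀ i ∈ C, ∀ j ∈ C, p i = p j :=
  cycle_equal_profits_general γ p haon C hC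
end

section
/- Assume every singleton {i}, i ∈ [n], is independent. If S ⊆ [n] is dependent, then there exists a dependent subset S' ⊆ S all of whose items have the same profit, i.e., p_i = p_j for all i, j ∈ S'. -/
/-! Take an inclusion-minimal dependent subset `S'` of `S`. For every `k ∈ S'` the set `S' \ {k}`
is independent, and adding `k` back cannot add `p k` (that would make `S'` independent), so
`γ S' + p k = ∑ i ∈ S', p i`. The right-hand side does not depend on `k`, hence neither does
`p k`. -/

open Finset

section

variable {n : ℕ} {γ : Finset (Fin n) → ℕ} {p : Fin n → ℕ}

lemma add_profit_eq_sum_of_minimal_dependent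
    (haon : ∀ (i : Fin n) (S : Finset (Fin n)),
      γ (insert i S) = γ S ∨ γ (insert i S) = γ S + p i)
    {S : Finset (Fin n)} (hS : Minimal (¬ AoNIndep γ p ·) S) {k : Fin n} (hk : k ∈ S) :
    γ S + p k = ∑ i ∈ S, p i := by
  have hErase : γ (S.erase k) = ∑ i ∈ S.erase k, p i := by
    by_contra h
    exact (erase_ssubset hk).not_ge (hS.2 h (erase_subset k S))
  have hSum : ∑ i ∈ S.erase k, p i + p k = ∑ i ∈ S, p i := sum_erase_add _ _ hk
  rcases haon k (S.erase k) with hGain | hGain <;> rw [insert_erase hk] at hGain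
  · rw [hGain, hErase, hSum]
  · exact absurd (by rw [AoNIndep, hGain, hErase, hSum]) hS.1

lemma profit_eq_of_minimal_dependent
    (haon : ∀ (i : Fin n) (S : Finset (Fin n)),
      γ (insert i S) = γ S ∨ γ (insert i S) = γ S + p i)
    {S : Finset (Fin n)} (hS : Minimal (¬ AoNIndep γ p ·) S) {i j : Fin n} (hi : i ∈ S)
    (hj : j ∈ S) : p i = p j :=
  Nat.add_left_cancel <|
    (add_profit_eq_sum_of_minimal_dependent haon hS hi).trans
      (add_profit_eq_sum_of_minimal_dependent haon hS hj).symm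

end

theorem dependent_contains_equal_profit_dependent_general {n : ℕ}
    (γ : Finset (Fin n) → ℕ) (p : Fin n → ℕ)
    (haon : ∀ (i : Fin n) (S : Finset (Fin n)),
      γ (insert i S) = γ S ∨ γ (insert i S) = γ S + p i)
    (S : Finset (Fin n)) (hS : ¬ AoNIndep γ p S) :
    ∃ S' ⊆ S, ¬ AoNIndep γ p S' ∧ ∀ i ∈ S', ∀ j ∈ S', p i = p j := by
  obtain ⟨S', hS'S, hMin⟩ := exists_minimal_le_of_wellFoundedLT (¬ AoNIndep γ p ·) S hS
  exact ⟨S', hS'S, hMin.1, fun _ hi _ hj => profit_eq_of_minimal_dependent haon hMin hi hj⟩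

theorem dependent_contains_equal_profit_dependent {n : ℕ}
    (γ : Finset (Fin n) → ℕ) (p : Fin n → ℕ)
    (hp : ∀ i, 1 ≤ p i)
    (hγ0 : γ ∅ = 0)
    (hmono : ∀ S T : Finset (Fin n), S ⊆ T → γ S ≤ γ T)
    (hsub : ∀ S T : Finset (Fin n), S ⊆ T → ∀ i : Fin n,
      γ (insert i S) + γ T ≥ γ (insert i T) + γ S)
    (haon : ∀ (i : Fin n) (S : Finset (Fin n)),
      γ (insert i S) = γ S ∨ γ (insert i S) = γ S + p i)
    (hsingle : ∀ i : Fin n, AoNIndep γ p {i})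
    (S : Finset (Fin n)) (hS : ¬ AoNIndep γ p S) :
    ∃ S' ⊆ S, ¬ AoNIndep γ p S' ∧ ∀ i ∈ S', ∀ j ∈ S', p i = p j :=
  dependent_contains_equal_profit_dependent_general γ p haon S hS
end

section
/- (Matroid exchange within a profit class) Let S, S' ⊆ [n] be independent sets all of whose items have the same profit q (i.e., p_i = q for every i ∈ S ∪ S'). If |S| > |S'|, then there exists j ∈ S \ S' such that S' ∪ {j} is independent. -/
/-!
If no element of `S \ S'` can be added to `S'`, then every element of `S` has zero marginal
value on `S'`, and by submodularity it keeps zero marginal value on every superset of `S'`.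
Adding the elements of `S` one at a time therefore gives `γ (S' ∪ S) = γ S'`, so by
monotonicity `q * #S = γ S ≤ γ S' = q * #S'`, contradicting `#S' < #S`.
-/

open Finset

section Marginal

variable {α : Type*} [DecidableEq α] (γ : Finset α → ℕ)

lemma monotone_of_marginal_eq_zero_or_eq (p : α → ℕ)
    (haon : ∀ (i : α) (S : Finset α), γ (insert i S) = γ S ∨ γ (insert i S) = γ S + p i) :
    Monotone γ :=
  Finset.monotone_iff_forall_le_insert.mpr fun S i _ => by rcases haon i S with h | h <;> omega

variable {γ}

lemma marginal_eq_zero_of_subset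
    (hsub : ∀ S T : Finset α, S ⊆ T → ∀ i : α, γ (insert i S) + γ T ≥ γ (insert i T) + γ S)
    (hmono : Monotone γ) {A B : Finset α} (hAB : A ⊆ B) {j : α}
    (hj : γ (insert j A) = γ A) : γ (insert j B) = γ B := by
  have := hsub A B hAB j
  exact le_antisymm (by omega) (hmono (subset_insert j B))

lemma union_eq_of_marginal_eq_zero
    (hsub : ∀ S T : Finset α, S ⊆ T → ∀ i : α, γ (insert i S) + γ T ≥ γ (insert i T) + γ S)
    (hmono : Monotone γ) {A T : Finset α} (hT : ∀ j ∈ T, γ (insert j A) = γ A) :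
    γ (A ∪ T) = γ A := by
  induction T using Finset.induction with
  | empty => rw [union_empty]
  | insert j T _ ih =>
    rw [union_insert, marginal_eq_zero_of_subset hsub hmono subset_union_left
      (hT j (mem_insert_self j T)), ih fun k hk => hT k (mem_insert_of_mem hk)]

end Marginal

lemma AoNIndep.eq_mul_card {n : ℕ} {γ : Finset (Fin n) → ℕ} {p : Fin n → ℕ} {S : Finset (Fin n)}
    (hS : AoNIndep γ p S) {q : ℕ} (hq : ∀ i ∈ S, p i = q) : γ S = q * #S := by
  rw [hS, sum_congr rfl hq, sum_const, smul_eq_mul, mul_comm]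

lemma AoNIndep.insert_of_marginal_ne_zero {n : ℕ} {γ : Finset (Fin n) → ℕ} {p : Fin n → ℕ}
    {S : Finset (Fin n)} (hS : AoNIndep γ p S) {j : Fin n} (hj : j ∉ S)
    (haon : γ (insert j S) = γ S ∨ γ (insert j S) = γ S + p j)
    (hne : γ (insert j S) ≠ γ S) : AoNIndep γ p (insert j S) := by
  rw [AoNIndep, sum_insert hj, add_comm, ← hS]
  exact haon.resolve_left hne

theorem exchange_within_profit_class_general {n : ℕ} (γ : Finset (Fin n) → ℕ) (p : Fin n → ℕ)
    (hp : ∀ i, 1 ≤ p i)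
    (hsub : ∀ S T : Finset (Fin n), S ⊆ T → ∀ i : Fin n,
      γ (insert i S) + γ T ≥ γ (insert i T) + γ S)
    (haon : ∀ (i : Fin n) (S : Finset (Fin n)),
      γ (insert i S) = γ S ∨ γ (insert i S) = γ S + p i)
    (q : ℕ) (S S' : Finset (Fin n))
    (hS : AoNIndep γ p S) (hS' : AoNIndep γ p S')
    (hq : ∀ i ∈ S ∪ S', p i = q)
    (hcard : S'.card < S.card) :
    ∃ j ∈ S \ S', AoNIndep γ p (insert j S') := by
  by_contra! hnone
  have hmono := monotone_of_marginal_eq_zero_or_eq γ p haon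
  have hzero : ∀ j ∈ S, γ (insert j S') = γ S' := fun j hj => by
    by_cases hjS' : j ∈ S'
    · rw [insert_eq_of_mem hjS']
    · by_contra hne
      exact hnone j (mem_sdiff.mpr ⟨hj, hjS'⟩) (hS'.insert_of_marginal_ne_zero hjS' (haon j S') hne)
  have hle : γ S ≤ γ S' :=
    union_eq_of_marginal_eq_zero hsub hmono hzero ▸ hmono subset_union_right
  obtain ⟨i, hi⟩ := card_pos.mp (lt_of_le_of_lt (Nat.zero_le _) hcard)
  have hq_pos : 0 < q := hq i (mem_union_left _ hi) ▸ hp i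
  rw [hS.eq_mul_card fun i hi => hq i (mem_union_left _ hi),
    hS'.eq_mul_card fun i hi => hq i (mem_union_right _ hi)] at hle
  exact absurd (Nat.le_of_mul_le_mul_left hle hq_pos) (not_le.mpr hcard)

theorem exchange_within_profit_class {n : ℕ} (γ : Finset (Fin n) → ℕ) (p : Fin n → ℕ)
    (hp : ∀ i, 1 ≤ p i)
    (hγ0 : γ ∅ = 0)
    (hmono : ∀ S T : Finset (Fin n), S ⊆ T → γ S ≤ γ T)
    (hsub : ∀ S T : Finset (Fin n), S ⊆ T → ∀ i : Fin n,
      γ (insert i S) + γ T ≥ γ (insert i T) + γ S)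
    (haon : ∀ (i : Fin n) (S : Finset (Fin n)),
      γ (insert i S) = γ S ∨ γ (insert i S) = γ S + p i)
    (q : ℕ) (S S' : Finset (Fin n))
    (hS : AoNIndep γ p S) (hS' : AoNIndep γ p S')
    (hq : ∀ i ∈ S ∪ S', p i = q)
    (hcard : S'.card < S.card) :
    ∃ j ∈ S \ S', AoNIndep γ p (insert j S') :=
  exchange_within_profit_class_general γ p hp hsub haon q S S' hS hS' hq hcard
end

section
/- (Matroidal structure of independent sets in a profit class) Fix a profit value q and let P = {i ∈ [n] : p_i = q}. Then the family M = {S ⊆ P : S is independent} is the family of independent sets of a matroid on P; that is, ∅ ∈ M, M is closed under taking subsets, and for every A ⊆ P, any two subsets of A that are inclusionwise maximal among members of M contained in A have the same cardinality. -/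
/-!
A maximal independent subset `B` of `A` spans `A`: every `i ∈ A \ B` adds nothing to `γ B`
(otherwise `insert i B` would be a larger independent set), and by submodularity neither does
all of `A \ B`, so `γ B = γ A`. On the profit class `P` every independent set `S` has
`γ S = q * #S`, hence all maximal independent subsets of `A` have the same cardinality
`γ A / q`; when `q = 0` every subset of `P` is independent and `A` itself is the only one.
-/

open Finset

def AllOrNothing {α : Type*} [DecidableEq α] (γ : Finset α → ℕ) (p : α → ℕ) : Prop :=
  ∀ (i : α) (S : Finset α), γ (insert i S) = γ S ∨ γ (insert i S) = γ S + p i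

namespace AllOrNothing

variable {α : Type*} [DecidableEq α] {γ : Finset α → ℕ} {p : α → ℕ}

theorem le_insert (haon : AllOrNothing γ p) (i : α) (S : Finset α) :
    γ S ≤ γ (insert i S) := by
  rcases haon i S with h | h <;> omega

theorem union_le_add_sum (haon : AllOrNothing γ p) (S T : Finset α) :
    γ (S ∪ T) ≤ γ S + ∑ i ∈ T, p i := by
  induction T using Finset.induction_on with
  | empty => simp
  | insert a T ha ih =>
    rw [union_insert, sum_insert ha]
    rcases haon a (S ∪ T) with h | h <;> omega

theorem le_sum (haon : AllOrNothing γ p) (hγ0 : γ ∅ = 0) (S : Finset α) :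
    γ S ≤ ∑ i ∈ S, p i := by
  simpa [hγ0] using haon.union_le_add_sum ∅ S

theorem eq_sum_of_subset (haon : AllOrNothing γ p) (hγ0 : γ ∅ = 0) {S S' : Finset α}
    (hS' : S' ⊆ S) (hS : γ S = ∑ i ∈ S, p i) : γ S' = ∑ i ∈ S', p i := by
  have hsplit := haon.union_le_add_sum S' (S \ S')
  rw [union_sdiff_of_subset hS'] at hsplit
  have hsum := sum_sdiff (f := p) hS'
  have := haon.le_sum hγ0 S'
  omega

theorem union_eq_of_forall_insert_eq (haon : AllOrNothing γ p)
    (hsub : ∀ S T : Finset α, S ⊆ T → ∀ i : α, γ (insert i S) + γ T ≥ γ (insert i T) + γ S)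
    {B D : Finset α} (hD : ∀ i ∈ D, γ (insert i B) = γ B) : γ (B ∪ D) = γ B := by
  induction D using Finset.induction_on with
  | empty => simp
  | insert a D _ ih =>
    have hBD : γ (B ∪ D) = γ B := ih fun i hi => hD i (mem_insert_of_mem hi)
    have ha : γ (insert a B) = γ B := hD a (mem_insert_self a D)
    have hdim := hsub B (B ∪ D) subset_union_left a
    have hmono := haon.le_insert a (B ∪ D)
    rw [union_insert]
    omega

theorem eq_of_maximal_indep (haon : AllOrNothing γ p)
    (hsub : ∀ S T : Finset α, S ⊆ T → ∀ i : α, γ (insert i S) + γ T ≥ γ (insert i T) + γ S)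
    {A B : Finset α} (hBA : B ⊆ A) (hB : γ B = ∑ i ∈ B, p i)
    (hBmax : ∀ C : Finset α, C ⊆ A → γ C = ∑ i ∈ C, p i → B ⊆ C → B = C) :
    γ B = γ A := by
  have hflat : ∀ i ∈ A, γ (insert i B) = γ B := by
    intro i hiA
    by_cases hiB : i ∈ B
    · rw [insert_eq_of_mem hiB]
    refine (haon i B).resolve_right fun hgain => hiB ?_
    have hindep : γ (insert i B) = ∑ j ∈ insert i B, p j := by
      rw [sum_insert hiB, hgain, hB, add_comm]
    rw [hBmax _ (insert_subset hiA hBA) hindep (subset_insert i B)]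
    exact mem_insert_self i B
  rw [← haon.union_eq_of_forall_insert_eq hsub hflat, union_eq_right.mpr hBA]

end AllOrNothing

theorem profit_class_matroid_general {n : ℕ} (γ : Finset (Fin n) → ℕ) (p : Fin n → ℕ)
    (hγ0 : γ ∅ = 0)
    (hsub : ∀ S T : Finset (Fin n), S ⊆ T → ∀ i : Fin n,
      γ (insert i S) + γ T ≥ γ (insert i T) + γ S)
    (haon : ∀ (i : Fin n) (S : Finset (Fin n)),
      γ (insert i S) = γ S ∨ γ (insert i S) = γ S + p i)
    (q : ℕ) (P : Finset (Fin n)) (hP : P = Finset.univ.filter (fun i => p i = q)) :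
    -- the empty set is independent
    AoNIndep γ p ∅ ∧
    -- independence (within P) is closed under taking subsets
    (∀ S S' : Finset (Fin n), S ⊆ P → S' ⊆ S → AoNIndep γ p S → AoNIndep γ p S') ∧
    -- all inclusionwise maximal independent subsets of any A ⊆ P have equal cardinality
    (∀ A : Finset (Fin n), A ⊆ P →
      ∀ B B' : Finset (Fin n),
        B ⊆ A → AoNIndep γ p B →
        (∀ C : Finset (Fin n), C ⊆ A → AoNIndep γ p C → B ⊆ C → B = C) →
        B' ⊆ A → AoNIndep γ p B' →
        (∀ C : Finset (Fin n), C ⊆ A → AoNIndep γ p C → B' ⊆ C → B' = C) →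
        B.card = B'.card) := by
  replace haon : AllOrNothing γ p := haon
  refine ⟨by simp [AoNIndep, hγ0], fun S S' _ hS' hS => haon.eq_sum_of_subset hγ0 hS' hS, ?_⟩
  intro A hA B B' hBA hB hBmax hB'A hB' hB'max
  have hsum : ∀ S ⊆ A, ∑ i ∈ S, p i = S.card * q := fun S hS =>
    sum_const_nat fun i hi => by simpa [hP] using hA (hS hi)
  have hcard : B.card * q = B'.card * q := by
    rw [← hsum B hBA, ← hsum B' hB'A, ← hB, ← hB', haon.eq_of_maximal_indep hsub hBA hB hBmax,
      haon.eq_of_maximal_indep hsub hB'A hB' hB'max]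
  rcases Nat.eq_zero_or_pos q with rfl | hq
  · have hAindep : AoNIndep γ p A := by
      have := haon.le_sum hγ0 A
      unfold AoNIndep
      rw [hsum A subset_rfl] at this ⊢
      omega
    rw [hBmax A subset_rfl hAindep hBA, hB'max A subset_rfl hAindep hB'A]
  · exact Nat.eq_of_mul_eq_mul_right hq hcard

theorem profit_class_matroid {n : ℕ} (γ : Finset (Fin n) → ℕ) (p : Fin n → ℕ)
    (hp : ∀ i, 1 ≤ p i)
    (hγ0 : γ ∅ = 0)
    (hmono : ∀ S T : Finset (Fin n), S ⊆ T → γ S ≤ γ T)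
    (hsub : ∀ S T : Finset (Fin n), S ⊆ T → ∀ i : Fin n,
      γ (insert i S) + γ T ≥ γ (insert i T) + γ S)
    (haon : ∀ (i : Fin n) (S : Finset (Fin n)),
      γ (insert i S) = γ S ∨ γ (insert i S) = γ S + p i)
    (q : ℕ) (P : Finset (Fin n)) (hP : P = Finset.univ.filter (fun i => p i = q)) :
    -- the empty set is independent
    AoNIndep γ p ∅ ∧
    -- independence (within P) is closed under taking subsets
    (∀ S S' : Finset (Fin n), S ⊆ P → S' ⊆ S → AoNIndep γ p S → AoNIndep γ p S') ∧
    -- all inclusionwise maximal independent subsets of any A ⊆ P have equal cardinality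
    (∀ A : Finset (Fin n), A ⊆ P →
      ∀ B B' : Finset (Fin n),
        B ⊆ A → AoNIndep γ p B →
        (∀ C : Finset (Fin n), C ⊆ A → AoNIndep γ p C → B ⊆ C → B = C) →
        B' ⊆ A → AoNIndep γ p B' →
        (∀ C : Finset (Fin n), C ⊆ A → AoNIndep γ p C → B' ⊆ C → B' = C) →
        B.card = B'.card) :=
  profit_class_matroid_general γ p hγ0 hsub haon q P hP
end

section
/- Assume every singleton {i}, i ∈ [n], is independent. For each profit value q occurring among the p_i, let P_I^q be an inclusionwise maximal independent subset of the profit class P^q = {i ∈ [n] : p_i = q}, and let I* = ∪_q P_I^q. Then every subset S ⊆ I* is independent, i.e., γ(S) = ∑_{i ∈ S} p_i. -/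
/-!
A minimal dependent set `S` has all profits equal: each `S.erase i` is independent, and by
all-or-nothing adding `i` back contributes `0` (contributing `p i` would make `S` independent),
so `γ S + p i = ∑ j ∈ S, p j` for every `i ∈ S`. Inside `I*` such an `S` therefore lies in a
single class basis `P_I^q`, and subsets of independent sets are independent, a contradiction.
-/

open Finset

theorem le_add_sum_of_aon {α : Type*} [DecidableEq α] (γ : Finset α → ℕ) (p : α → ℕ)
    (haon : ∀ (i : α) (S : Finset α), γ (insert i S) = γ S ∨ γ (insert i S) = γ S + p i)
    (T U : Finset α) : γ (T ∪ U) ≤ γ T + ∑ i ∈ U, p i := by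
  induction U using Finset.induction with
  | empty => simp
  | @insert i U hiU ih =>
    rw [union_insert, sum_insert hiU]
    rcases haon i (T ∪ U) with h | h <;> omega

section

variable {n : ℕ} {γ : Finset (Fin n) → ℕ} {p : Fin n → ℕ}

theorem AoNIndep.empty (hγ0 : γ ∅ = 0) : AoNIndep γ p ∅ := by
  simp [AoNIndep, hγ0]

theorem AoNIndep.subset (hγ0 : γ ∅ = 0)
    (haon : ∀ (i : Fin n) (S : Finset (Fin n)),
      γ (insert i S) = γ S ∨ γ (insert i S) = γ S + p i)
    {S T : Finset (Fin n)} (hS : AoNIndep γ p S) (hTS : T ⊆ S) : AoNIndep γ p T := by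
  have hST : γ S ≤ γ T + ∑ i ∈ S \ T, p i := by
    simpa [union_sdiff_of_subset hTS] using le_add_sum_of_aon γ p haon T (S \ T)
  have hT : γ T ≤ ∑ i ∈ T, p i := by
    simpa [hγ0] using le_add_sum_of_aon γ p haon ∅ T
  have hsum := sum_sdiff hTS (f := p)
  unfold AoNIndep at hS ⊢
  omega

theorem add_eq_sum_of_not_indep_of_erase_indep
    (haon : ∀ (i : Fin n) (S : Finset (Fin n)),
      γ (insert i S) = γ S ∨ γ (insert i S) = γ S + p i)
    {S : Finset (Fin n)} (hS : ¬ AoNIndep γ p S) {i : Fin n} (hi : i ∈ S)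
    (hSi : AoNIndep γ p (S.erase i)) : γ S + p i = ∑ j ∈ S, p j := by
  have hsum := sum_erase_add S p hi
  unfold AoNIndep at hS hSi
  rcases haon i (S.erase i) with h | h <;> rw [insert_erase hi] at h <;> omega

theorem AoNIndep.of_forall_subset_of_profit_const
    (haon : ∀ (i : Fin n) (S : Finset (Fin n)),
      γ (insert i S) = γ S ∨ γ (insert i S) = γ S + p i)
    {I : Finset (Fin n)}
    (hconst : ∀ S ⊆ I, (∀ i ∈ S, ∀ j ∈ S, p i = p j) → AoNIndep γ p S) :
    ∀ S ⊆ I, AoNIndep γ p S := by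
  intro S
  induction S using Finset.strongInduction with
  | _ S ih =>
    intro hSI
    by_contra hS
    have hadd : ∀ i ∈ S, γ S + p i = ∑ j ∈ S, p j := fun i hi =>
      add_eq_sum_of_not_indep_of_erase_indep haon hS hi
        (ih _ (erase_ssubset hi) ((erase_subset i S).trans hSI))
    refine hS (hconst S hSI fun i hi j hj => ?_)
    have := hadd i hi
    have := hadd j hj
    omega

end

theorem union_of_maximal_class_bases_indep_general {n : ℕ} (γ : Finset (Fin n) → ℕ)
    (p : Fin n → ℕ)
    (hγ0 : γ ∅ = 0)
    (haon : ∀ (i : Fin n) (S : Finset (Fin n)),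
      γ (insert i S) = γ S ∨ γ (insert i S) = γ S + p i)
    -- for each profit value `q` occurring among the `p i`, `PI q` is an
    -- inclusionwise maximal independent subset of the profit class
    (PI : ℕ → Finset (Fin n))
    (hPIsub : ∀ q ∈ Finset.univ.image p, PI q ⊆ Finset.univ.filter (fun i => p i = q))
    (hPIindep : ∀ q ∈ Finset.univ.image p, AoNIndep γ p (PI q))
    (Istar : Finset (Fin n)) (hIstar : Istar = (Finset.univ.image p).biUnion PI) :
    ∀ S ⊆ Istar, AoNIndep γ p S := by
  refine AoNIndep.of_forall_subset_of_profit_const haon fun S hSI hconst => ?_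
  obtain rfl | ⟨i, hi⟩ := S.eq_empty_or_nonempty
  · exact AoNIndep.empty hγ0
  have hq : p i ∈ univ.image p := mem_image_of_mem p (mem_univ i)
  have hS : S ⊆ PI (p i) := by
    intro j hj
    obtain ⟨q, hq, hjq⟩ := mem_biUnion.mp (hIstar ▸ hSI hj)
    have hpj : p j = q := (mem_filter.mp (hPIsub q hq hjq)).2
    rwa [hconst i hi j hj, hpj]
  exact (hPIindep _ hq).subset hγ0 haon hS

theorem union_of_maximal_class_bases_indep {n : ℕ} (γ : Finset (Fin n) → ℕ)
    (p : Fin n → ℕ)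
    (hp : ∀ i, 1 ≤ p i)
    (hγ0 : γ ∅ = 0)
    (hmono : ∀ S T : Finset (Fin n), S ⊆ T → γ S ≤ γ T)
    (hsub : ∀ S T : Finset (Fin n), S ⊆ T → ∀ i : Fin n,
      γ (insert i S) + γ T ≥ γ (insert i T) + γ S)
    (haon : ∀ (i : Fin n) (S : Finset (Fin n)),
      γ (insert i S) = γ S ∨ γ (insert i S) = γ S + p i)
    (hsingle : ∀ i : Fin n, AoNIndep γ p {i})
    -- for each profit value `q` occurring among the `p i`, `PI q` is an
    -- inclusionwise maximal independent subset of the profit class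
    (PI : ℕ → Finset (Fin n))
    (hPIsub : ∀ q ∈ Finset.univ.image p, PI q ⊆ Finset.univ.filter (fun i => p i = q))
    (hPIindep : ∀ q ∈ Finset.univ.image p, AoNIndep γ p (PI q))
    (hPImax : ∀ q ∈ Finset.univ.image p, ∀ B : Finset (Fin n),
      B ⊆ Finset.univ.filter (fun i => p i = q) → AoNIndep γ p B → PI q ⊆ B → PI q = B)
    (Istar : Finset (Fin n)) (hIstar : Istar = (Finset.univ.image p).biUnion PI) :
    ∀ S ⊆ Istar, AoNIndep γ p S :=
  union_of_maximal_class_bases_indep_general γ p hγ0 haon PI hPIsub hPIindep Istar hIstar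
end

section
/- (Approximation preservation, mathematical content of Theorem 1) Assume every singleton {i}, i ∈ [n], is independent. For each profit value q occurring among the p_i, let P_I^q be an inclusionwise maximal independent subset of minimum total weight of the profit class P^q = {i ∈ [n] : p_i = q}, and let I* = ∪_q P_I^q. Let α ∈ ℝ with 0 ≤ α ≤ 1, and let 𝒮̄ = (S̄_1, …, S̄_T) be a feasible chain with S̄_T ⊆ I* such that ∑_{t=1}^T Δ_t · ∑_{i ∈ S̄_t} p_i ≥ α · ∑_{t=1}^T Δ_t · ∑_{i ∈ S'_t} p_i for every feasible chain 𝒮' with S'_T ⊆ I*. Then ∑_{t=1}^T Δ_t · γ(S̄_t) ≥ α · ∑_{t=1}^T Δ_t · γ(S_t) for every feasible chain 𝒮 = (S_1, …, S_T). -/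
/-!
Within one profit class the independent sets form a matroid, and `γ` is additive over profit
classes. A feasible chain `S` can therefore be replaced class by class: if `S t` has rank `k` in
class `q`, take the `k` lightest elements of the minimum-weight basis `PI q`. Taking prefixes of one
greedy order keeps the chain nested, the greedy property of minimum-weight bases keeps it feasible,
it lies in `I*`, and its modular profit is `∑ t, Δ t * γ (S t)`. Since `Sbar` lies in the
independent set `I*`, its modular profit is its `γ`-profit.
-/

open Finset

structure IsAoNAggregation {n : ℕ} (γ : Finset (Fin n) → ℕ) (p : Fin n → ℕ) : Prop where
  one_le_profit : ∀ i, 1 ≤ p i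
  map_empty : γ ∅ = 0
  mono : ∀ S T : Finset (Fin n), S ⊆ T → γ S ≤ γ T
  submod : ∀ S T : Finset (Fin n), S ⊆ T → ∀ i : Fin n,
    γ (insert i S) + γ T ≥ γ (insert i T) + γ S
  insert_eq : ∀ (i : Fin n) (S : Finset (Fin n)),
    γ (insert i S) = γ S ∨ γ (insert i S) = γ S + p i

theorem pairwiseDisjoint_of_forall_apply_eq {ι κ : Type*} {f : ι → κ} {s : Set κ}
    {C : κ → Finset ι} (hC : ∀ q ∈ s, ∀ i ∈ C q, f i = q) : s.PairwiseDisjoint C :=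
  fun q hq r hr hqr =>
    disjoint_left.2 fun i hiq hir => hqr ((hC q hq i hiq).symm.trans (hC r hr i hir))

namespace IsAoNAggregation

variable {n : ℕ} {γ : Finset (Fin n) → ℕ} {p : Fin n → ℕ} {A B C S T : Finset (Fin n)} {i : Fin n}

theorem insert_eq_add_of_subset (hγ : IsAoNAggregation γ p) (hAB : A ⊆ B)
    (h : γ (insert i B) = γ B + p i) : γ (insert i A) = γ A + p i := by
  have := hγ.submod A B hAB i
  have := hγ.one_le_profit i
  rcases hγ.insert_eq i A with h' | h' <;> omega

theorem notMem_of_insert_eq_add (hγ : IsAoNAggregation γ p) (h : γ (insert i A) = γ A + p i) :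
    i ∉ A := by
  intro hi
  rw [insert_eq_of_mem hi] at h
  have := hγ.one_le_profit i
  omega

theorem union_le_add_sum (hγ : IsAoNAggregation γ p) (A B : Finset (Fin n)) :
    γ (A ∪ B) ≤ γ A + ∑ i ∈ B, p i := by
  induction B using Finset.induction_on with
  | empty => simp
  | insert b B hbB ih =>
    rw [union_insert, sum_insert hbB]
    rcases hγ.insert_eq b (A ∪ B) with h | h <;> omega

theorem le_sum (hγ : IsAoNAggregation γ p) (A : Finset (Fin n)) : γ A ≤ ∑ i ∈ A, p i := by
  simpa [hγ.map_empty] using hγ.union_le_add_sum ∅ A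

theorem indep_of_subset (hγ : IsAoNAggregation γ p) (hS : AoNIndep γ p S) (hAS : A ⊆ S) :
    AoNIndep γ p A := by
  have h₁ := hγ.le_sum A
  have h₂ := hγ.union_le_add_sum A (S \ A)
  rw [union_sdiff_of_subset hAS] at h₂
  have := sum_sdiff hAS (f := p)
  unfold AoNIndep at hS ⊢
  omega

theorem exists_indep_subset_eq (hγ : IsAoNAggregation γ p) (A : Finset (Fin n)) :
    ∃ B ⊆ A, AoNIndep γ p B ∧ γ B = γ A := by
  induction A using Finset.induction_on with
  | empty => exact ⟨∅, subset_rfl, by simp [AoNIndep, hγ.map_empty], rfl⟩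
  | insert i A hiA ih =>
    obtain ⟨B, hBA, hB, hγB⟩ := ih
    rcases hγ.insert_eq i A with h | h
    · exact ⟨B, hBA.trans (subset_insert i A), hB, hγB.trans h.symm⟩
    · have hiB := hγ.insert_eq_add_of_subset hBA h
      refine ⟨insert i B, insert_subset_insert i hBA, ?_, by omega⟩
      unfold AoNIndep at hB ⊢
      rw [hiB, sum_insert (fun hi => hiA (hBA hi)), hB, add_comm]

theorem exists_insert_eq_add_of_lt (hγ : IsAoNAggregation γ p) (h : γ A < γ (A ∪ B)) :
    ∃ b ∈ B, γ (insert b A) = γ A + p b := by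
  induction B using Finset.induction_on with
  | empty => simp at h
  | insert b B hbB ih =>
    rw [union_insert] at h
    rcases hγ.insert_eq b (A ∪ B) with h' | h'
    · obtain ⟨c, hc, hc'⟩ := ih (h' ▸ h)
      exact ⟨c, mem_insert_of_mem hc, hc'⟩
    · exact ⟨b, mem_insert_self b B, hγ.insert_eq_add_of_subset subset_union_left h'⟩

theorem exists_insert_indep_of_sum_lt (hγ : IsAoNAggregation γ p) (hA : AoNIndep γ p A)
    (hB : AoNIndep γ p B) (h : ∑ i ∈ A, p i < ∑ i ∈ B, p i) :
    ∃ b ∈ B, b ∉ A ∧ AoNIndep γ p (insert b A) := by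
  have hlt : γ A < γ (A ∪ B) := by
    have := hγ.mono B (A ∪ B) subset_union_right
    unfold AoNIndep at hA hB
    omega
  obtain ⟨b, hbB, hb⟩ := hγ.exists_insert_eq_add_of_lt hlt
  have hbA := hγ.notMem_of_insert_eq_add hb
  refine ⟨b, hbB, hbA, ?_⟩
  unfold AoNIndep at hA ⊢
  rw [hb, sum_insert hbA, hA, add_comm]

theorem insert_eq_self_erase (hγ : IsAoNAggregation γ p) {j : Fin n} (hij : p i ≠ p j)
    (h : γ (insert i S) = γ S) : γ (insert i (S.erase j)) = γ (S.erase j) := by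
  by_cases hjS : j ∈ S
  · set B := S.erase j
    have h' : γ (insert j (insert i B)) = γ (insert j B) := by
      rwa [insert_comm, insert_erase hjS]
    have := hγ.one_le_profit i
    have := hγ.one_le_profit j
    rcases hγ.insert_eq i B with h₁ | h₁
    · exact h₁
    -- with `i` of full marginal at `B`, the two sides of `h'` could only agree if `p i = p j`
    rcases hγ.insert_eq j (insert i B) with h₂ | h₂ <;>
      rcases hγ.insert_eq j B with h₃ | h₃ <;> omega
  · rwa [erase_eq_of_notMem hjS]

theorem insert_eq_self_of_subset (hγ : IsAoNAggregation γ p) (hTS : T ⊆ S)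
    (hST : ∀ j ∈ S \ T, p j ≠ p i) (h : γ (insert i S) = γ S) : γ (insert i T) = γ T := by
  induction S using Finset.strongInduction with
  | H S ih =>
    obtain rfl | hTS' := hTS.eq_or_ssubset
    · exact h
    obtain ⟨j, hjS, hjT⟩ := exists_of_ssubset hTS'
    exact ih (S.erase j) (erase_ssubset hjS) (subset_erase.2 ⟨hTS, hjT⟩)
      (fun k hk => hST k (sdiff_subset_sdiff (erase_subset j S) subset_rfl hk))
      (hγ.insert_eq_self_erase (hST j (mem_sdiff.2 ⟨hjS, hjT⟩)).symm h)

theorem union_eq_add (hγ : IsAoNAggregation γ p) {q : ℕ} (hC : ∀ i ∈ C, p i = q)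
    (hS : ∀ j ∈ S, p j ≠ q) : γ (S ∪ C) = γ S + γ C := by
  induction C using Finset.induction_on with
  | empty => simp [hγ.map_empty]
  | insert c C hcC ih =>
    have hc := hC c (mem_insert_self c C)
    have ih := ih fun i hi => hC i (mem_insert_of_mem hi)
    rw [union_insert]
    rcases hγ.insert_eq c (S ∪ C) with h | h
    · have := hγ.insert_eq_self_of_subset subset_union_right (fun j hj => ?_) h
      · omega
      obtain ⟨hj, hjC⟩ := mem_sdiff.1 hj
      exact hc ▸ hS j ((mem_union.1 hj).resolve_right hjC)
    · have := hγ.insert_eq_add_of_subset subset_union_right h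
      omega

theorem biUnion_eq_sum (hγ : IsAoNAggregation γ p) {Q : Finset ℕ} {C : ℕ → Finset (Fin n)}
    (hC : ∀ q ∈ Q, ∀ i ∈ C q, p i = q) : γ (Q.biUnion C) = ∑ q ∈ Q, γ (C q) := by
  induction Q using Finset.induction_on with
  | empty => simp [hγ.map_empty]
  | insert q Q hqQ ih =>
    have hQ : ∀ j ∈ Q.biUnion C, p j ≠ q := by
      intro j hj
      obtain ⟨r, hr, hjr⟩ := mem_biUnion.1 hj
      rw [hC r (mem_insert_of_mem hr) j hjr]
      rintro rfl
      exact hqQ hr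
    rw [biUnion_insert, sum_insert hqQ, union_comm,
      hγ.union_eq_add (hC q (mem_insert_self q Q)) hQ,
      ih fun r hr => hC r (mem_insert_of_mem hr), add_comm]

theorem indep_biUnion (hγ : IsAoNAggregation γ p) {Q : Finset ℕ} {C : ℕ → Finset (Fin n)}
    (hC : ∀ q ∈ Q, ∀ i ∈ C q, p i = q) (hind : ∀ q ∈ Q, AoNIndep γ p (C q)) :
    AoNIndep γ p (Q.biUnion C) := by
  rw [AoNIndep, hγ.biUnion_eq_sum hC, sum_biUnion (pairwiseDisjoint_of_forall_apply_eq hC)]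
  exact sum_congr rfl hind

end IsAoNAggregation

section Lightest

variable {α β : Type*} [DecidableEq α] [LinearOrder β]

noncomputable def lightest (w : α → β) (M : Finset α) : ℕ → Finset α
  | 0 => ∅
  | k + 1 =>
    if h : (M \ lightest w M k).Nonempty then
      insert ((M \ lightest w M k).exists_min_image w h).choose (lightest w M k)
    else lightest w M k

variable (w : α → β) (M : Finset α)

theorem lightest_succ_of_nonempty {k : ℕ} (h : (M \ lightest w M k).Nonempty) :
    ∃ e ∈ M \ lightest w M k, lightest w M (k + 1) = insert e (lightest w M k) ∧
      ∀ x ∈ M \ lightest w M k, w e ≤ w x := by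
  obtain ⟨he, hmin⟩ := ((M \ lightest w M k).exists_min_image w h).choose_spec
  exact ⟨_, he, by rw [lightest, dif_pos h], hmin⟩

theorem lightest_subset : ∀ k, lightest w M k ⊆ M
  | 0 => empty_subset M
  | k + 1 => by
    by_cases h : (M \ lightest w M k).Nonempty
    · obtain ⟨e, he, heq, -⟩ := lightest_succ_of_nonempty w M h
      exact heq ▸ insert_subset (mem_sdiff.1 he).1 (lightest_subset k)
    · rw [lightest, dif_neg h]
      exact lightest_subset k

theorem lightest_mono : Monotone (lightest w M) := by
  refine monotone_nat_of_le_succ fun k => ?_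
  by_cases h : (M \ lightest w M k).Nonempty
  · obtain ⟨e, -, heq, -⟩ := lightest_succ_of_nonempty w M h
    exact heq ▸ subset_insert e _
  · rw [lightest, dif_neg h]

theorem card_lightest : ∀ k, #(lightest w M k) = min k #M
  | 0 => by simp [lightest]
  | k + 1 => by
    have ih := card_lightest k
    by_cases h : (M \ lightest w M k).Nonempty
    · obtain ⟨e, he, heq, -⟩ := lightest_succ_of_nonempty w M h
      have hlt : #(lightest w M k) < #M :=
        card_lt_card ((lightest_subset w M k).ssubset_of_not_subset (sdiff_nonempty.1 h))
      rw [heq, card_insert_of_notMem (mem_sdiff.1 he).2]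
      omega
    · have hM : M ⊆ lightest w M k := not_not.1 (mt sdiff_nonempty.2 h)
      have := card_le_card hM
      rw [lightest, dif_neg h]
      omega

end Lightest

section Bases

variable {n : ℕ}

def IsBasisIn (γ : Finset (Fin n) → ℕ) (p : Fin n → ℕ) (X M : Finset (Fin n)) : Prop :=
  Maximal (fun B => B ⊆ X ∧ AoNIndep γ p B) M

def IsMinWeightBasisIn (γ : Finset (Fin n) → ℕ) (p w : Fin n → ℕ) (X M : Finset (Fin n)) :
    Prop :=
  IsBasisIn γ p X M ∧ ∀ B, IsBasisIn γ p X B → ∑ i ∈ M, w i ≤ ∑ i ∈ B, w i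

variable {γ : Finset (Fin n) → ℕ} {p w : Fin n → ℕ} {X M A C E : Finset (Fin n)} {q : ℕ}

theorem isBasisIn_iff : IsBasisIn γ p X M ↔
    M ⊆ X ∧ AoNIndep γ p M ∧ ∀ B ⊆ X, AoNIndep γ p B → M ⊆ B → M = B :=
  ⟨fun h => ⟨h.prop.1, h.prop.2, fun _ hBX hB hMB => hMB.antisymm (h.2 ⟨hBX, hB⟩ hMB)⟩,
    fun ⟨hMX, hM, hmax⟩ => ⟨⟨hMX, hM⟩, fun B ⟨hBX, hB⟩ hMB => (hmax B hBX hB hMB).ge⟩⟩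

namespace IsAoNAggregation

theorem sum_le_of_isBasisIn (hγ : IsAoNAggregation γ p) (hM : IsBasisIn γ p X M) (hAX : A ⊆ X)
    (hA : AoNIndep γ p A) : ∑ i ∈ A, p i ≤ ∑ i ∈ M, p i := by
  by_contra! h
  obtain ⟨b, hbA, hbM, hb⟩ := hγ.exists_insert_indep_of_sum_lt hM.prop.2 hA h
  exact hbM (hM.2 ⟨insert_subset (hAX hbA) hM.prop.1, hb⟩ (subset_insert b M)
    (mem_insert_self b M))

theorem exists_isBasisIn_between (hγ : IsAoNAggregation γ p) (hM : IsBasisIn γ p X M)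
    (hAX : A ⊆ X) (hA : AoNIndep γ p A) : ∃ B, IsBasisIn γ p X B ∧ A ⊆ B ∧ B ⊆ A ∪ M := by
  -- a maximal independent set between `A` and `A ∪ M` has at least the profit of `M`,
  -- so no independent subset of `X` properly contains it
  obtain ⟨B, hAB, hB⟩ :=
    (Set.toFinite {B | A ⊆ B ∧ B ⊆ A ∪ M ∧ AoNIndep γ p B}).exists_le_maximal
      ⟨subset_rfl, subset_union_left, hA⟩
  obtain ⟨-, hBAM, hBind⟩ := hB.prop
  have hMB : ∑ i ∈ M, p i ≤ ∑ i ∈ B, p i := by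
    by_contra! h
    obtain ⟨m, hmM, hmB, hm⟩ := hγ.exists_insert_indep_of_sum_lt hBind hM.prop.2 h
    exact hmB (hB.2
      ⟨hAB.trans (subset_insert m B), insert_subset (mem_union_right A hmM) hBAM, hm⟩
      (subset_insert m B) (mem_insert_self m B))
  refine ⟨B, ⟨⟨hBAM.trans (union_subset hAX hM.prop.1), hBind⟩, fun D ⟨hDX, hD⟩ hBD => ?_⟩,
    hAB, hBAM⟩
  by_contra hDB
  obtain ⟨d, hdD, hdB⟩ := not_subset.1 hDB
  have h₁ := sum_le_sum_of_subset (f := p) (insert_subset hdD hBD)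
  rw [sum_insert hdB] at h₁
  have := hγ.sum_le_of_isBasisIn hM hDX hD
  have := hγ.one_le_profit d
  omega

theorem exists_mem_sdiff_weight_le (hγ : IsAoNAggregation γ p)
    (hM : IsMinWeightBasisIn γ p w X M) (hEM : E ⊆ M) {b : Fin n} (hbX : b ∈ X) (hbE : b ∉ E)
    (hb : AoNIndep γ p (insert b E)) :
    ∃ x ∈ M \ E, w x ≤ w b := by
  by_cases hbM : b ∈ M
  · exact ⟨b, mem_sdiff.2 ⟨hbM, hbE⟩, le_rfl⟩
  obtain ⟨B, hB, hbEB, hBM⟩ :=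
    hγ.exists_isBasisIn_between hM.1 (insert_subset hbX (hEM.trans hM.1.prop.1)) hb
  rw [insert_union, union_eq_right.2 hEM] at hBM
  -- the basis `B ⊆ insert b M` trades some `x ∈ M` for `b`, and `M` has minimum weight
  obtain ⟨x, hxM, hxB⟩ : ∃ x ∈ M, x ∉ B := by
    by_contra! hMB
    have h₁ := sum_le_sum_of_subset (f := p) (insert_subset (hbEB (mem_insert_self b E)) hMB)
    rw [sum_insert hbM] at h₁
    have := hγ.sum_le_of_isBasisIn hM.1 hB.prop.1 hB.prop.2
    have := hγ.one_le_profit b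
    omega
  refine ⟨x, mem_sdiff.2 ⟨hxM, fun hxE => hxB (hbEB (mem_insert_of_mem hxE))⟩, ?_⟩
  have h₁ : ∑ i ∈ B, w i ≤ ∑ i ∈ insert b (M.erase x), w i := by
    refine sum_le_sum_of_subset ?_
    rw [← erase_insert_of_ne (fun h : b = x => hbM (h ▸ hxM))]
    exact subset_erase.2 ⟨hBM, hxB⟩
  rw [sum_insert (fun h => hbM (mem_of_mem_erase h))] at h₁
  have := sum_erase_add M w hxM
  have := hM.2 B hB
  omega

theorem card_le_of_isBasisIn (hγ : IsAoNAggregation γ p) (hX : ∀ i ∈ X, p i = q)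
    (hM : IsBasisIn γ p X M) (hAX : A ⊆ X) (hA : AoNIndep γ p A) : #A ≤ #M := by
  obtain rfl | ⟨a, ha⟩ := A.eq_empty_or_nonempty
  · simp
  have h := hγ.sum_le_of_isBasisIn hM hAX hA
  rw [sum_const_nat fun i hi => hX i (hAX hi), sum_const_nat fun i hi => hX i (hM.prop.1 hi)] at h
  exact Nat.le_of_mul_le_mul_right h (hX a (hAX ha) ▸ hγ.one_le_profit a)

theorem sum_lightest_card_le (hγ : IsAoNAggregation γ p) (hX : ∀ i ∈ X, p i = q)
    (hM : IsMinWeightBasisIn γ p w X M) (hAX : A ⊆ X) (hA : AoNIndep γ p A) :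
    ∑ i ∈ lightest w M #A, w i ≤ ∑ i ∈ A, w i := by
  induction A using Finset.induction_on_max_value w with
  | empty => simp [lightest]
  | insert a A haA hmax ih =>
    -- `a` is the heaviest element of `insert a A`; the next greedy element `e` of `M` is no heavier
    have hcard := hγ.card_le_of_isBasisIn hX hM.1 hAX hA
    rw [card_insert_of_notMem haA] at hcard ⊢
    set L := lightest w M #A
    have hLM : L ⊆ M := lightest_subset w M #A
    have hL : #L = #A := by rw [card_lightest]; omega
    obtain ⟨e, he, hLe, hemin⟩ := lightest_succ_of_nonempty w M (k := #A)
      (sdiff_nonempty.2 fun h : M ⊆ L => by have := card_le_card h; omega)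
    have hq : 1 ≤ q := hX a (hAX (mem_insert_self a A)) ▸ hγ.one_le_profit a
    have hsum : ∑ i ∈ L, p i < ∑ i ∈ insert a A, p i := by
      rw [sum_const_nat fun i hi => hX i (hM.1.prop.1 (hLM hi)),
        sum_const_nat fun i hi => hX i (hAX hi), card_insert_of_notMem haA, hL]
      exact Nat.mul_lt_mul_of_pos_right (Nat.lt_succ_self _) hq
    obtain ⟨b, hbA, hbL, hb⟩ :=
      hγ.exists_insert_indep_of_sum_lt (hγ.indep_of_subset hM.1.prop.2 hLM) hA hsum
    obtain ⟨x, hx, hxb⟩ := hγ.exists_mem_sdiff_weight_le hM hLM (hAX hbA) hbL hb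
    have hba : w b ≤ w a := by
      rcases mem_insert.1 hbA with rfl | hbA
      · exact le_rfl
      · exact hmax b hbA
    rw [hLe, sum_insert (mem_sdiff.1 he).2, sum_insert haA]
    exact add_le_add ((hemin x hx).trans (hxb.trans hba))
      (ih ((subset_insert a A).trans hAX) (hγ.indep_of_subset hA (subset_insert a A)))

theorem exists_indep_card_eq_div (hγ : IsAoNAggregation γ p) (hX : ∀ i ∈ X, p i = q)
    (hCX : C ⊆ X) : ∃ A ⊆ C, AoNIndep γ p A ∧ #A = γ C / q ∧ γ C = #A * q := by
  obtain ⟨A, hAC, hA, hγA⟩ := hγ.exists_indep_subset_eq C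
  have hγC : γ C = #A * q := by
    rw [← hγA, hA, sum_const_nat fun i hi => hX i (hCX (hAC hi))]
  refine ⟨A, hAC, hA, ?_, hγC⟩
  obtain rfl | ⟨a, ha⟩ := A.eq_empty_or_nonempty
  · simp [hγC]
  rw [hγC, Nat.mul_div_cancel _ (hX a (hCX (hAC ha)) ▸ hγ.one_le_profit a)]

theorem sum_profit_lightest (hγ : IsAoNAggregation γ p) (hX : ∀ i ∈ X, p i = q)
    (hM : IsBasisIn γ p X M) (hCX : C ⊆ X) : ∑ i ∈ lightest w M (γ C / q), p i = γ C := by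
  obtain ⟨A, hAC, hA, hdiv, hγC⟩ := hγ.exists_indep_card_eq_div hX hCX
  rw [← hdiv, sum_const_nat fun i hi => hX i (hM.prop.1 (lightest_subset w M _ hi)),
    card_lightest, min_eq_left (hγ.card_le_of_isBasisIn hX hM (hAC.trans hCX) hA), hγC]

theorem sum_weight_lightest_le (hγ : IsAoNAggregation γ p) (hX : ∀ i ∈ X, p i = q)
    (hM : IsMinWeightBasisIn γ p w X M) (hCX : C ⊆ X) :
    ∑ i ∈ lightest w M (γ C / q), w i ≤ ∑ i ∈ C, w i := by
  obtain ⟨A, hAC, hA, hdiv, -⟩ := hγ.exists_indep_card_eq_div hX hCX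
  rw [← hdiv]
  exact (hγ.sum_lightest_card_le hX hM (hAC.trans hCX) hA).trans (sum_le_sum_of_subset hAC)

end IsAoNAggregation

end Bases

section Surrogate

variable {n : ℕ} {γ : Finset (Fin n) → ℕ} {p w : Fin n → ℕ} {PI : ℕ → Finset (Fin n)}

/-- `γ (S.filter (p · = q)) / q` is the rank of the profit class `q` of `S`. -/
noncomputable def surrogate (γ : Finset (Fin n) → ℕ) (p w : Fin n → ℕ)
    (PI : ℕ → Finset (Fin n)) (S : Finset (Fin n)) : Finset (Fin n) :=
  (univ.image p).biUnion fun q => lightest w (PI q) (γ (S.filter (p · = q)) / q)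

theorem surrogate_subset_biUnion (S : Finset (Fin n)) :
    surrogate γ p w PI S ⊆ (univ.image p).biUnion PI :=
  biUnion_mono fun q _ => lightest_subset w (PI q) _

theorem pairwiseDisjoint_lightest (hPI : ∀ q ∈ univ.image p, PI q ⊆ univ.filter (p · = q))
    (S : Finset (Fin n)) :
    (↑(univ.image p) : Set ℕ).PairwiseDisjoint
      fun q => lightest w (PI q) (γ (S.filter (p · = q)) / q) :=
  pairwiseDisjoint_of_forall_apply_eq fun q hq _ hi =>
    (mem_filter.1 (hPI q hq (lightest_subset w (PI q) _ hi))).2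

namespace IsAoNAggregation

theorem surrogate_mono (hγ : IsAoNAggregation γ p) {S T : Finset (Fin n)} (hST : S ⊆ T) :
    surrogate γ p w PI S ⊆ surrogate γ p w PI T :=
  biUnion_mono fun q _ => lightest_mono w (PI q)
    (Nat.div_le_div_right (hγ.mono _ _ (filter_subset_filter _ hST)))

theorem sum_profit_surrogate (hγ : IsAoNAggregation γ p)
    (hPI : ∀ q ∈ univ.image p, IsBasisIn γ p (univ.filter (p · = q)) (PI q))
    (S : Finset (Fin n)) :
    ∑ i ∈ surrogate γ p w PI S, p i = γ S := by
  have hp : ∀ i ∈ S, p i ∈ univ.image p := fun i _ => mem_image_of_mem p (mem_univ i)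
  rw [surrogate, sum_biUnion (pairwiseDisjoint_lightest (fun q hq => (hPI q hq).prop.1) S)]
  conv_rhs =>
    rw [← biUnion_filter_eq_of_maps_to hp, hγ.biUnion_eq_sum fun q _ i hi => (mem_filter.1 hi).2]
  exact sum_congr rfl fun q hq => hγ.sum_profit_lightest (fun i hi => (mem_filter.1 hi).2)
    (hPI q hq) (filter_subset_filter _ (subset_univ S))

theorem sum_weight_surrogate_le (hγ : IsAoNAggregation γ p)
    (hPI : ∀ q ∈ univ.image p, IsMinWeightBasisIn γ p w (univ.filter (p · = q)) (PI q))
    (S : Finset (Fin n)) : ∑ i ∈ surrogate γ p w PI S, w i ≤ ∑ i ∈ S, w i := by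
  rw [surrogate, sum_biUnion (pairwiseDisjoint_lightest (fun q hq => (hPI q hq).1.prop.1) S),
    ← sum_fiberwise_of_maps_to fun i _ => mem_image_of_mem p (mem_univ i)]
  exact sum_le_sum fun q hq => hγ.sum_weight_lightest_le (fun i hi => (mem_filter.1 hi).2)
    (hPI q hq) (filter_subset_filter _ (subset_univ S))

end IsAoNAggregation

end Surrogate

theorem approximation_preservation_general {n T : ℕ} (γ : Finset (Fin n) → ℕ)
    (p w : Fin n → ℕ) (W Δ : Fin T → ℕ)
    (hp : ∀ i, 1 ≤ p i)
    (hγ0 : γ ∅ = 0)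
    (hmono : ∀ S T : Finset (Fin n), S ⊆ T → γ S ≤ γ T)
    (hsub : ∀ S T : Finset (Fin n), S ⊆ T → ∀ i : Fin n,
      γ (insert i S) + γ T ≥ γ (insert i T) + γ S)
    (haon : ∀ (i : Fin n) (S : Finset (Fin n)),
      γ (insert i S) = γ S ∨ γ (insert i S) = γ S + p i)
    -- `PI q` is an inclusionwise maximal independent subset of minimum total
    -- weight of the profit class `{i : p i = q}`, for each occurring value `q`
    (PI : ℕ → Finset (Fin n))
    (hPIsub : ∀ q ∈ Finset.univ.image p, PI q ⊆ Finset.univ.filter (fun i => p i = q))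
    (hPIindep : ∀ q ∈ Finset.univ.image p, AoNIndep γ p (PI q))
    (hPImax : ∀ q ∈ Finset.univ.image p, ∀ B : Finset (Fin n),
      B ⊆ Finset.univ.filter (fun i => p i = q) → AoNIndep γ p B → PI q ⊆ B → PI q = B)
    (hPImin : ∀ q ∈ Finset.univ.image p, ∀ B : Finset (Fin n),
      B ⊆ Finset.univ.filter (fun i => p i = q) → AoNIndep γ p B →
      (∀ C : Finset (Fin n), C ⊆ Finset.univ.filter (fun i => p i = q) →
        AoNIndep γ p C → B ⊆ C → B = C) →
      ∑ i ∈ PI q, w i ≤ ∑ i ∈ B, w i)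
    (Istar : Finset (Fin n)) (hIstar : Istar = (Finset.univ.image p).biUnion PI)
    (α : ℝ)
    -- `Sbar` is a feasible chain inside I* that is an α-approximation of the
    -- modularized problem restricted to I*
    (Sbar : Fin T → Finset (Fin n))
    (hSbarsub : ∀ t, Sbar t ⊆ Istar)
    (hSbarapx : ∀ S' : Fin T → Finset (Fin n), Monotone S' →
      (∀ t, ∑ i ∈ S' t, w i ≤ W t) → (∀ t, S' t ⊆ Istar) →
      (∑ t, (Δ t : ℝ) * ∑ i ∈ Sbar t, (p i : ℝ)) ≥
        α * ∑ t, (Δ t : ℝ) * ∑ i ∈ S' t, (p i : ℝ)) :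
    -- then `Sbar` is an α-approximation of the original problem
    ∀ S : Fin T → Finset (Fin n), Monotone S → (∀ t, ∑ i ∈ S t, w i ≤ W t) →
      (∑ t, (Δ t : ℝ) * (γ (Sbar t) : ℝ)) ≥ α * ∑ t, (Δ t : ℝ) * (γ (S t) : ℝ) := by
  intro S hS hSW
  have hγ : IsAoNAggregation γ p := ⟨hp, hγ0, hmono, hsub, haon⟩
  have hPI : ∀ q ∈ univ.image p, IsMinWeightBasisIn γ p w (univ.filter (p · = q)) (PI q) :=
    fun q hq => ⟨isBasisIn_iff.2 ⟨hPIsub q hq, hPIindep q hq, hPImax q hq⟩,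
      fun B hB => hPImin q hq B hB.prop.1 hB.prop.2 (isBasisIn_iff.1 hB).2.2⟩
  have hIstar_indep : AoNIndep γ p Istar := hIstar ▸ hγ.indep_biUnion
    (fun q hq i hi => (mem_filter.1 (hPIsub q hq hi)).2) hPIindep
  have hSbar (t : Fin T) : γ (Sbar t) = ∑ i ∈ Sbar t, p i :=
    hγ.indep_of_subset hIstar_indep (hSbarsub t)
  have hS' (t : Fin T) : γ (S t) = ∑ i ∈ surrogate γ p w PI (S t), p i :=
    (hγ.sum_profit_surrogate (fun q hq => (hPI q hq).1) (S t)).symm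
  simp only [hSbar, hS', Nat.cast_sum]
  exact hSbarapx _ (fun s t hst => hγ.surrogate_mono (hS hst))
    (fun t => (hγ.sum_weight_surrogate_le hPI (S t)).trans (hSW t))
    (fun t => hIstar ▸ surrogate_subset_biUnion (S t))

theorem approximation_preservation {n T : ℕ} (γ : Finset (Fin n) → ℕ)
    (p w : Fin n → ℕ) (W Δ : Fin T → ℕ)
    (hW : Monotone W)
    (hp : ∀ i, 1 ≤ p i)
    (hγ0 : γ ∅ = 0)
    (hmono : ∀ S T : Finset (Fin n), S ⊆ T → γ S ≤ γ T)
    (hsub : ∀ S T : Finset (Fin n), S ⊆ T → ∀ i : Fin n,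
      γ (insert i S) + γ T ≥ γ (insert i T) + γ S)
    (haon : ∀ (i : Fin n) (S : Finset (Fin n)),
      γ (insert i S) = γ S ∨ γ (insert i S) = γ S + p i)
    (hsingle : ∀ i : Fin n, AoNIndep γ p {i})
    -- `PI q` is an inclusionwise maximal independent subset of minimum total
    -- weight of the profit class `{i : p i = q}`, for each occurring value `q`
    (PI : ℕ → Finset (Fin n))
    (hPIsub : ∀ q ∈ Finset.univ.image p, PI q ⊆ Finset.univ.filter (fun i => p i = q))
    (hPIindep : ∀ q ∈ Finset.univ.image p, AoNIndep γ p (PI q))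
    (hPImax : ∀ q ∈ Finset.univ.image p, ∀ B : Finset (Fin n),
      B ⊆ Finset.univ.filter (fun i => p i = q) → AoNIndep γ p B → PI q ⊆ B → PI q = B)
    (hPImin : ∀ q ∈ Finset.univ.image p, ∀ B : Finset (Fin n),
      B ⊆ Finset.univ.filter (fun i => p i = q) → AoNIndep γ p B →
      (∀ C : Finset (Fin n), C ⊆ Finset.univ.filter (fun i => p i = q) →
        AoNIndep γ p C → B ⊆ C → B = C) →
      ∑ i ∈ PI q, w i ≤ ∑ i ∈ B, w i)
    (Istar : Finset (Fin n)) (hIstar : Istar = (Finset.univ.image p).biUnion PI)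
    (α : ℝ) (hα0 : 0 ≤ α) (hα1 : α ≤ 1)
    -- `Sbar` is a feasible chain inside I* that is an α-approximation of the
    -- modularized problem restricted to I*
    (Sbar : Fin T → Finset (Fin n))
    (hSbarchain : Monotone Sbar)
    (hSbarfeas : ∀ t, ∑ i ∈ Sbar t, w i ≤ W t)
    (hSbarsub : ∀ t, Sbar t ⊆ Istar)
    (hSbarapx : ∀ S' : Fin T → Finset (Fin n), Monotone S' →
      (∀ t, ∑ i ∈ S' t, w i ≤ W t) → (∀ t, S' t ⊆ Istar) →
      (∑ t, (Δ t : ℝ) * ∑ i ∈ Sbar t, (p i : ℝ)) ≥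
        α * ∑ t, (Δ t : ℝ) * ∑ i ∈ S' t, (p i : ℝ)) :
    -- then `Sbar` is an α-approximation of the original problem
    ∀ S : Fin T → Finset (Fin n), Monotone S → (∀ t, ∑ i ∈ S t, w i ≤ W t) →
      (∑ t, (Δ t : ℝ) * (γ (Sbar t) : ℝ)) ≥ α * ∑ t, (Δ t : ℝ) * (γ (S t) : ℝ) :=
  approximation_preservation_general γ p w W Δ hp hγ0 hmono hsub haon PI hPIsub hPIindep hPImax
    hPImin Istar hIstar α Sbar hSbarsub hSbarapx
end

section
/- Let S, S' be independent sets all of whose items have the same profit q (i.e., p_i = q for every i ∈ S ∪ S'), with |S| > |S'|. Then γ(S ∪ S') > γ(S'). -/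
open Finset

theorem AoNIndep.eq_card_mul {n : ℕ} {γ : Finset (Fin n) → ℕ} {p : Fin n → ℕ}
    {S : Finset (Fin n)} {q : ℕ} (hS : AoNIndep γ p S) (hq : ∀ i ∈ S, p i = q) :
    γ S = S.card * q := by
  rw [hS, sum_congr rfl hq, sum_const, smul_eq_mul]

theorem AoNIndep.lt_of_card_lt {n : ℕ} {γ : Finset (Fin n) → ℕ} {p : Fin n → ℕ}
    (hp : ∀ i, 1 ≤ p i) {S S' : Finset (Fin n)} {q : ℕ}
    (hS : AoNIndep γ p S) (hS' : AoNIndep γ p S') (hq : ∀ i ∈ S ∪ S', p i = q)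
    (hcard : S'.card < S.card) :
    γ S' < γ S := by
  obtain ⟨i, hi⟩ := card_pos.mp (hcard.trans_le' (Nat.zero_le _))
  have hq_pos : 0 < q := hq i (mem_union_left _ hi) ▸ hp i
  rw [hS.eq_card_mul fun i hi ↦ hq i (mem_union_left _ hi),
    hS'.eq_card_mul fun i hi ↦ hq i (mem_union_right _ hi)]
  exact Nat.mul_lt_mul_of_pos_right hcard hq_pos

theorem gamma_union_gt_general {n : ℕ} (γ : Finset (Fin n) → ℕ) (p : Fin n → ℕ)
    (hp : ∀ i, 1 ≤ p i)
    (hmono : ∀ S T : Finset (Fin n), S ⊆ T → γ S ≤ γ T)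
    (q : ℕ) (S S' : Finset (Fin n))
    (hS : AoNIndep γ p S) (hS' : AoNIndep γ p S')
    (hq : ∀ i ∈ S ∪ S', p i = q)
    (hcard : S'.card < S.card) :
    γ S' < γ (S ∪ S') :=
  (hS.lt_of_card_lt hp hS' hq hcard).trans_le (hmono _ _ subset_union_left)

theorem gamma_union_gt {n : ℕ} (γ : Finset (Fin n) → ℕ) (p : Fin n → ℕ)
    (hp : ∀ i, 1 ≤ p i)
    (hγ0 : γ ∅ = 0)
    (hmono : ∀ S T : Finset (Fin n), S ⊆ T → γ S ≤ γ T)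
    (hsub : ∀ S T : Finset (Fin n), S ⊆ T → ∀ i : Fin n,
      γ (insert i S) + γ T ≥ γ (insert i T) + γ S)
    (haon : ∀ (i : Fin n) (S : Finset (Fin n)),
      γ (insert i S) = γ S ∨ γ (insert i S) = γ S + p i)
    (q : ℕ) (S S' : Finset (Fin n))
    (hS : AoNIndep γ p S) (hS' : AoNIndep γ p S')
    (hq : ∀ i ∈ S ∪ S', p i = q)
    (hcard : S'.card < S.card) :
    γ S' < γ (S ∪ S') :=
  gamma_union_gt_general γ p hp hmono q S S' hS hS' hq hcard
end
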